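/- arXiv:1403.7019 — 4 statements merged into one kernel-verified Lean document; each statement's English description precedes it below -/
import Mathlib

section
/- Suppose there exist η̄ ∈ range(Dᵀ), ω̄ ∈ ℝⁿ and V̄ ∈ ℝⁿ with all entries positive such that 0 = Dᵀω̄, 0 = ū − D·Γ(V̄)·sin(η̄) − A·ω̄ − P^l, and 0 = −E(η̄)·V̄ + Ē_fd, for given constant vectors ū, P^l ∈ ℝⁿ. Then necessarily ω̄ = ω*·1ₙ where ω* = (1ₙᵀ(ū − P^l))/(1ₙᵀA1ₙ), and moreover (I − A·1ₙ1ₙᵀ/(1ₙᵀA1ₙ))·(ū − P^l) = D·Γ(V̄)·sin(η̄); in particular this vector lies in the set 𝒟 = {v ∈ range(D) : v = D·Γ(V̄)·sin(η̄) for some η̄ ∈ range(Dᵀ), V̄ ∈ ℝⁿ with positive entries}. -/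
/-! Connectedness makes `ω̄` constant, say `c`. The columns of `D` sum to zero, so summing the
power balance over all nodes removes the line flows and leaves `1ᵀ(ū − Pˡ) = c · 1ᵀA1`. -/

open Matrix Real Filter Topology Set

noncomputable section

/-- `Vec n` is `ℝⁿ`. -/
abbrev Vec (n : ℕ) := Fin n → ℝ

/-- Incidence matrix of the (undirected, arbitrarily oriented) graph whose `m` edges have
endpoints `ep1 k` (positive end) and `ep2 k` (negative end). -/
def incD {n m : ℕ} (ep1 ep2 : Fin m → Fin n) : Matrix (Fin n) (Fin m) ℝ :=
  Matrix.of fun i k => if i = ep1 k then 1 else if i = ep2 k then -1 else 0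

/-- `Γ(V) = diag(γ₁,…,γ_m)`, `γ_k = V_i V_j B_{ij}` for edge `k = {i,j}`. -/
def Gam {n m : ℕ} (ep1 ep2 : Fin m → Fin n) (B : Fin m → ℝ) (V : Vec n) :
    Matrix (Fin m) (Fin m) ℝ :=
  Matrix.diagonal fun k => V (ep1 k) * V (ep2 k) * B k

/-- The matrix `E(η)`. -/
def Emat {n m : ℕ} (ep1 ep2 : Fin m → Fin n) (B : Fin m → ℝ)
    (Bii Xd Xd' : Vec n) (η : Vec m) : Matrix (Fin n) (Fin n) ℝ :=
  Matrix.of fun i j =>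
    if i = j then (1 - Bii i * (Xd i - Xd' i)) / (Xd i - Xd' i)
    else -∑ k, (if (ep1 k = i ∧ ep2 k = j) ∨ (ep1 k = j ∧ ep2 k = i)
      then B k * Real.cos (η k) else 0)

/-- The diagonal matrix `F`. -/
def Fmat {n : ℕ} (Bii Xd Xd' : Vec n) : Matrix (Fin n) (Fin n) ℝ :=
  Matrix.diagonal fun i => (1 - Bii i * (Xd i - Xd' i)) / (Xd i - Xd' i)

/-- componentwise sine -/
def sinv {m : ℕ} (η : Vec m) : Vec m := fun k => Real.sin (η k)
/-- componentwise cosine -/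
def cosv {m : ℕ} (η : Vec m) : Vec m := fun k => Real.cos (η k)

/-- The storage function `W₂` with reference point `(ηb, Vb)`. -/
def W2 {n m : ℕ} (ep1 ep2 : Fin m → Fin n) (B : Fin m → ℝ) (Bii Xd Xd' : Vec n)
    (Efd : Vec n) (ηb : Vec m) (Vb : Vec n) (η : Vec m) (V : Vec n) : ℝ :=
  -((1 : Vec m) ⬝ᵥ (Gam ep1 ep2 B V).mulVec (cosv η))
    + (1 : Vec m) ⬝ᵥ (Gam ep1 ep2 B Vb).mulVec (cosv ηb)
    - ((Gam ep1 ep2 B Vb).mulVec (sinv ηb)) ⬝ᵥ (η - ηb)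
    - Efd ⬝ᵥ (V - Vb)
    + (1 / 2) * (V ⬝ᵥ (Fmat Bii Xd Xd').mulVec V)
    - (1 / 2) * (Vb ⬝ᵥ (Fmat Bii Xd Xd').mulVec Vb)

/-- entrywise absolute value `|D|` of the incidence matrix. -/
def absD {n m : ℕ} (ep1 ep2 : Fin m → Fin n) : Matrix (Fin n) (Fin m) ℝ :=
  Matrix.of fun i k => |incD ep1 ep2 i k|

/-- The matrix `E(η̄) − diag(V̄)⁻¹|D|Γ(V̄)diag(sin η̄)diag(cos η̄)⁻¹diag(sin η̄)|D|ᵀdiag(V̄)⁻¹`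
appearing in Assumption 3. -/
def Schur {n m : ℕ} (ep1 ep2 : Fin m → Fin n) (B : Fin m → ℝ) (Bii Xd Xd' : Vec n)
    (ηb : Vec m) (Vb : Vec n) : Matrix (Fin n) (Fin n) ℝ :=
  Emat ep1 ep2 B Bii Xd Xd' ηb -
    (Matrix.diagonal fun i => (Vb i)⁻¹) * absD ep1 ep2 * Gam ep1 ep2 B Vb *
      Matrix.diagonal (sinv ηb) * (Matrix.diagonal (cosv ηb))⁻¹ *
      Matrix.diagonal (sinv ηb) * (absD ep1 ep2)ᵀ * (Matrix.diagonal fun i => (Vb i)⁻¹)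

theorem vecMul_one_incD {n m : ℕ} {ep1 ep2 : Fin m → Fin n} (hep : ∀ k, ep1 k ≠ ep2 k) :
    (1 : Vec n) ᵥ* incD ep1 ep2 = 0 := by
  ext k
  simp [vecMul, dotProduct, incD, Finset.sum_ite, Finset.filter_eq', Finset.filter_ne',
    (hep k).symm]

theorem sum_incD_mulVec {n m : ℕ} {ep1 ep2 : Fin m → Fin n} (hep : ∀ k, ep1 k ≠ ep2 k)
    (y : Vec m) : ∑ i, (incD ep1 ep2 *ᵥ y) i = 0 := by
  rw [← one_dotProduct, dotProduct_mulVec, vecMul_one_incD hep, zero_dotProduct]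

theorem eq_sum_div_sum_of_eq_add_mul {ι : Type*} [Fintype ι] {x y a : ι → ℝ} {c : ℝ}
    (hx : ∀ i, x i = y i + a i * c) (hy : ∑ i, y i = 0) (ha : ∑ i, a i ≠ 0) :
    c = (∑ i, x i) / ∑ i, a i := by
  rw [eq_div_iff ha, Finset.sum_congr rfl fun i _ => hx i, Finset.sum_add_distrib, hy,
    ← Finset.sum_mul]
  ring

theorem steady_state_frequency_general
    {n m : ℕ} (ep1 ep2 : Fin m → Fin n) (hep : ∀ k, ep1 k ≠ ep2 k)
    (B : Fin m → ℝ)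
    (a : Vec n) (ha : ∀ i, 0 < a i)
    -- connectedness of the graph: the kernel of `Dᵀ` consists of the constant vectors
    (hconn : ∀ x : Vec n, (incD ep1 ep2)ᵀ.mulVec x = 0 → ∃ c : ℝ, x = fun _ => c)
    (ub Pl : Vec n)
    (ηb : Vec m) (hηb : ∃ δ : Vec n, ηb = (incD ep1 ep2)ᵀ.mulVec δ)
    (ωb : Vec n) (Vb : Vec n) (hVb : ∀ i, 0 < Vb i)
    (heq1 : (incD ep1 ep2)ᵀ.mulVec ωb = 0)
    (heq2 : (0 : Vec n) = ub - (incD ep1 ep2).mulVec ((Gam ep1 ep2 B Vb).mulVec (sinv ηb))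
      - (Matrix.diagonal a).mulVec ωb - Pl) :
    ωb = (fun _ => (∑ i, (ub i - Pl i)) / (∑ i, a i)) ∧
    (fun i => (ub i - Pl i) - a i * ((∑ j, (ub j - Pl j)) / (∑ j, a j)))
      = (incD ep1 ep2).mulVec ((Gam ep1 ep2 B Vb).mulVec (sinv ηb)) ∧
    (fun i => (ub i - Pl i) - a i * ((∑ j, (ub j - Pl j)) / (∑ j, a j))) ∈
      {v : Vec n | (∃ w : Vec m, v = (incD ep1 ep2).mulVec w) ∧
        ∃ η' : Vec m, (∃ δ : Vec n, η' = (incD ep1 ep2)ᵀ.mulVec δ) ∧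
        ∃ V' : Vec n, (∀ i, 0 < V' i) ∧
          v = (incD ep1 ep2).mulVec ((Gam ep1 ep2 B V').mulVec (sinv η'))} := by
  obtain ⟨c, rfl⟩ := hconn ωb heq1
  set flow := (incD ep1 ep2).mulVec ((Gam ep1 ep2 B Vb).mulVec (sinv ηb))
  have hbalance : ∀ i, ub i - Pl i = flow i + a i * c := fun i => by
    have := congrFun heq2 i
    simp only [Pi.zero_apply, Pi.sub_apply, mulVec_diagonal] at this
    linarith
  have hc : ∀ i : Fin n, c = (∑ j, (ub j - Pl j)) / ∑ j, a j := fun i =>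
    eq_sum_div_sum_of_eq_add_mul hbalance (sum_incD_mulVec hep _)
      (Finset.sum_pos (fun j _ => ha j) ⟨i, Finset.mem_univ i⟩).ne'
  have hflow : (fun i => (ub i - Pl i) - a i * ((∑ j, (ub j - Pl j)) / ∑ j, a j)) = flow :=
    funext fun i => by rw [← hc i, hbalance i]; ring
  exact ⟨funext hc, hflow, ⟨_, hflow⟩, ηb, hηb, Vb, hVb, hflow⟩

/-- Lemma 1: at any steady state with synchronous frequency, the frequency
deviation is `ω* = 1ᵀ(ū − Pˡ)/(1ᵀA1)` at every node, and
`(I − A11ᵀ/(1ᵀA1))(ū − Pˡ) = DΓ(V̄)sin(η̄)`, which in particular lies in the set `𝒟`. -/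
theorem steady_state_frequency
    {n m : ℕ} (ep1 ep2 : Fin m → Fin n) (hep : ∀ k, ep1 k ≠ ep2 k)
    (B : Fin m → ℝ) (hB : ∀ k, 0 < B k)
    (Bii Xd Xd' : Vec n)
    (a : Vec n) (ha : ∀ i, 0 < a i)
    -- connectedness of the graph: the kernel of `Dᵀ` consists of the constant vectors
    (hconn : ∀ x : Vec n, (incD ep1 ep2)ᵀ.mulVec x = 0 → ∃ c : ℝ, x = fun _ => c)
    (ub Pl Efd : Vec n)
    (ηb : Vec m) (hηb : ∃ δ : Vec n, ηb = (incD ep1 ep2)ᵀ.mulVec δ)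
    (ωb : Vec n) (Vb : Vec n) (hVb : ∀ i, 0 < Vb i)
    (heq1 : (incD ep1 ep2)ᵀ.mulVec ωb = 0)
    (heq2 : (0 : Vec n) = ub - (incD ep1 ep2).mulVec ((Gam ep1 ep2 B Vb).mulVec (sinv ηb))
      - (Matrix.diagonal a).mulVec ωb - Pl)
    (heq3 : (0 : Vec n) = -(Emat ep1 ep2 B Bii Xd Xd' ηb).mulVec Vb + Efd) :
    ωb = (fun _ => (∑ i, (ub i - Pl i)) / (∑ i, a i)) ∧
    (fun i => (ub i - Pl i) - a i * ((∑ j, (ub j - Pl j)) / (∑ j, a j)))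
      = (incD ep1 ep2).mulVec ((Gam ep1 ep2 B Vb).mulVec (sinv ηb)) ∧
    (fun i => (ub i - Pl i) - a i * ((∑ j, (ub j - Pl j)) / (∑ j, a j))) ∈
      {v : Vec n | (∃ w : Vec m, v = (incD ep1 ep2).mulVec w) ∧
        ∃ η' : Vec m, (∃ δ : Vec n, η' = (incD ep1 ep2)ᵀ.mulVec δ) ∧
        ∃ V' : Vec n, (∀ i, 0 < V' i) ∧
          v = (incD ep1 ep2).mulVec ((Gam ep1 ep2 B V').mulVec (sinv η'))} :=
  steady_state_frequency_general ep1 ep2 hep B a ha hconn ub Pl ηb hηb ωb Vb hVb heq1 heq2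
end
end

section
/- Suppose η̄ ∈ (−π/2, π/2)^m, V̄ ∈ ℝⁿ has all entries positive, E(η̄)·V̄ = Ē_fd, and the matrix E(η̄) − diag(V̄)⁻¹·|D|·Γ(V̄)·diag(sin(η̄))·diag(cos(η̄))⁻¹·diag(sin(η̄))·|D|ᵀ·diag(V̄)⁻¹ is positive definite, where |D| denotes the entrywise absolute value of D. Then the function (η, V) ↦ W₂(η, V) has a strict local minimum at (η̄, V̄): there is a neighborhood of (η̄, V̄) on which W₂(η, V) > W₂(η̄, V̄) = 0 for every (η, V) ≠ (η̄, V̄). -/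
open Matrix Real Filter Topology Set

noncomputable section

/-!
Write `(η, V) = (η̄ + δ, V̄ + Δ)`. Because `Ē_fd = E(η̄) V̄`, the linear terms of `W₂` cancel, and
`W₂` is a quadratic form in `(δ, Δ)` plus a sum over edges of terms that are cubic in `(δ, Δ)`
(products of increments, and the third-order Taylor remainder of `cos`). Completing the square in
`δₖ` edge by edge writes the quadratic form as a sum of nonnegative squares plus `½ Δᵀ S Δ`, with
`S` the positive definite matrix of the hypothesis. So the quadratic form is positive definite,
hence at least `c ‖(δ, Δ)‖²`, and it dominates the cubic remainder near `(η̄, V̄)`.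
-/

open Asymptotics

theorem exists_pos_mul_norm_sq_le_of_homogeneous {E : Type*} [NormedAddCommGroup E]
    [NormedSpace ℝ E] [ProperSpace E] {Q : E → ℝ} (hQc : Continuous Q)
    (hQsmul : ∀ (t : ℝ) x, Q (t • x) = t ^ 2 * Q x) (hQpos : ∀ x ≠ 0, 0 < Q x) :
    ∃ c > 0, ∀ x, c * ‖x‖ ^ 2 ≤ Q x := by
  rcases subsingleton_or_nontrivial E with hE | hE
  · refine ⟨1, one_pos, fun x => ?_⟩
    rw [Subsingleton.elim x 0, ← zero_smul ℝ (0 : E), hQsmul]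
    simp
  obtain ⟨u, hu, hmin⟩ := (isCompact_sphere (0 : E) 1).exists_isMinOn
    (NormedSpace.sphere_nonempty.mpr zero_le_one) hQc.continuousOn
  have hu0 : u ≠ 0 := ne_zero_of_mem_unit_sphere ⟨u, hu⟩
  refine ⟨Q u, hQpos u hu0, fun x => ?_⟩
  rcases eq_or_ne x 0 with rfl | hx
  · rw [← zero_smul ℝ (0 : E), hQsmul]; simp
  have hxn : ‖x‖ ≠ 0 := norm_ne_zero_iff.mpr hx
  have hsphere : ‖x‖⁻¹ • x ∈ Metric.sphere (0 : E) 1 := by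
    simp [norm_smul, hxn]
  calc Q u * ‖x‖ ^ 2 ≤ Q (‖x‖⁻¹ • x) * ‖x‖ ^ 2 := by gcongr; exact hmin hsphere
    _ = Q x := by rw [hQsmul]; field_simp

theorem eventually_lt_of_isLittleO_sub_quadratic {E : Type*} [NormedAddCommGroup E]
    [NormedSpace ℝ E] [ProperSpace E] {f Q : E → ℝ} {x₀ : E} (hQc : Continuous Q)
    (hQsmul : ∀ (t : ℝ) x, Q (t • x) = t ^ 2 * Q x) (hQpos : ∀ x ≠ 0, 0 < Q x)
    (hf : (fun h => f (x₀ + h) - f x₀ - Q h) =o[𝓝 0] fun h => ‖h‖ ^ 2) :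
    ∀ᶠ x in 𝓝 x₀, x ≠ x₀ → f x₀ < f x := by
  obtain ⟨c, hc, hQ⟩ := exists_pos_mul_norm_sq_le_of_homogeneous hQc hQsmul hQpos
  have hsmall : ∀ᶠ h in 𝓝 (0 : E), h ≠ 0 → f x₀ < f (x₀ + h) := by
    filter_upwards [hf.bound (half_pos hc)] with h hh hne
    have hpos : 0 < ‖h‖ ^ 2 := by positivity
    rw [Real.norm_eq_abs, norm_pow, norm_norm] at hh
    nlinarith [neg_abs_le (f (x₀ + h) - f x₀ - Q h), hQ h]
  have hmap : Tendsto (fun x => x - x₀) (𝓝 x₀) (𝓝 0) := tendsto_sub_nhds_zero_iff.mpr tendsto_id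
  filter_upwards [hmap.eventually hsmall] with x hx hne
  simpa using hx (sub_ne_zero.mpr hne)

theorem dotProduct_mul_diagonal_mul_transpose_mulVec {ι κ R : Type*} [Fintype ι] [Fintype κ]
    [CommRing R] [DecidableEq κ] (L : Matrix ι κ R) (d : κ → R) (x : ι → R) :
    x ⬝ᵥ (L * diagonal d * Lᵀ) *ᵥ x = ∑ k, d k * (Lᵀ *ᵥ x) k ^ 2 := by
  rw [← mulVec_mulVec, ← mulVec_mulVec, dotProduct_mulVec, ← mulVec_transpose, dotProduct]
  exact Finset.sum_congr rfl fun k _ => by rw [mulVec_diagonal]; ring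

theorem abs_cos_add_sub_taylor_le (a : ℝ) {d : ℝ} (hd : |d| ≤ 1) :
    |Real.cos (a + d) - (Real.cos a - Real.sin a * d - Real.cos a * d ^ 2 / 2)| ≤ |d| ^ 3 := by
  have hcos := Real.cos_bound hd
  have hsin := Real.sin_bound hd
  have hd0 := abs_nonneg d
  have hd4 : |d| ^ 4 ≤ |d| ^ 3 := pow_le_pow_of_le_one hd0 hd (by norm_num)
  have hd5 : |d| ^ 5 ≤ |d| ^ 3 := pow_le_pow_of_le_one hd0 hd (by norm_num)
  have hd3 : 0 ≤ |d| ^ 3 := by positivity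
  have hsplit : Real.cos (a + d) - (Real.cos a - Real.sin a * d - Real.cos a * d ^ 2 / 2) =
      Real.cos a * (Real.cos d - (1 - d ^ 2 / 2)) - Real.sin a * (Real.sin d - (d - d ^ 3 / 6))
        + Real.sin a * (d ^ 3 / 6) := by
    rw [Real.cos_add]; ring
  rw [hsplit]
  calc _ ≤ |Real.cos a| * |Real.cos d - (1 - d ^ 2 / 2)|
        + |Real.sin a| * |Real.sin d - (d - d ^ 3 / 6)| + |Real.sin a| * (|d| ^ 3 / 6) := by
        refine (abs_add_le _ _).trans (add_le_add ((abs_sub _ _).trans_eq ?_) ?_)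
        · rw [abs_mul, abs_mul]
        · rw [abs_mul, abs_div, abs_pow]; norm_num
    _ ≤ 1 * (|d| ^ 4 * (5 / 96)) + 1 * (|d| ^ 5 / 100) + 1 * (|d| ^ 3 / 6) := by
        gcongr <;> first | exact Real.abs_cos_le_one a | exact Real.abs_sin_le_one a
    _ ≤ |d| ^ 3 := by linarith

/-- Edge `k` with `a = η̄ₖ`, endpoint voltages `x, y` and increments `d = δₖ` and `u, v` of the
endpoint voltages contributes `B k * (edgeQuadratic a x y d u v + edgeRemainder a x y d u v)` to
`W₂(η̄ + δ, V̄ + Δ)`. -/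
def edgeQuadratic (a x y d u v : ℝ) : ℝ :=
  (x * v + y * u) * Real.sin a * d + x * y * Real.cos a * d ^ 2 / 2 - Real.cos a * u * v

def edgeRemainder (a x y d u v : ℝ) : ℝ :=
  u * v * Real.sin a * d + (x * v + y * u + u * v) * Real.cos a * d ^ 2 / 2 -
    (x + u) * (y + v) * (Real.cos (a + d) - (Real.cos a - Real.sin a * d - Real.cos a * d ^ 2 / 2))

theorem edgeQuadratic_eq_sq_sub {a x y : ℝ} (ha : Real.cos a ≠ 0) (hx : x ≠ 0) (hy : y ≠ 0)
    (d u v : ℝ) :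
    edgeQuadratic a x y d u v =
      x * y * Real.cos a / 2 * (d + Real.sin a / Real.cos a * (u / x + v / y)) ^ 2 -
        Real.cos a * u * v - x * y * (Real.sin a ^ 2 / Real.cos a) * (u / x + v / y) ^ 2 / 2 := by
  rw [edgeQuadratic]
  field_simp
  ring

theorem abs_edgeRemainder_le (a x y : ℝ) {d u v M : ℝ} (hM : M ≤ 1) (hd : |d| ≤ M)
    (hu : |u| ≤ M) (hv : |v| ≤ M) :
    |edgeRemainder a x y d u v| ≤ 3 * ((|x| + 1) * (|y| + 1)) * M ^ 3 := by
  have hM0 : 0 ≤ M := (abs_nonneg d).trans hd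
  have hsin := Real.abs_sin_le_one a
  have hcos := Real.abs_cos_le_one a
  have hxy : |x| + |y| + 1 ≤ 2 * ((|x| + 1) * (|y| + 1)) := by
    nlinarith [abs_nonneg x, abs_nonneg y]
  have hxy1 : 1 ≤ (|x| + 1) * (|y| + 1) := by nlinarith [abs_nonneg x, abs_nonneg y]
  have h1 : |u * v * Real.sin a * d| ≤ M * M * 1 * M := by
    simp only [abs_mul]; gcongr
  have huv : |u * v| ≤ M := by
    rw [abs_mul]; nlinarith [abs_nonneg u, abs_nonneg v, mul_le_mul hu hv (abs_nonneg v) hM0]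
  have hlin : |x * v + y * u + u * v| ≤ (|x| + |y| + 1) * M := by
    have hxv : |x * v| ≤ |x| * M := by rw [abs_mul]; gcongr
    have hyu : |y * u| ≤ |y| * M := by rw [abs_mul]; gcongr
    linarith [abs_add_three (x * v) (y * u) (u * v)]
  have h2 : |(x * v + y * u + u * v) * Real.cos a * d ^ 2 / 2| ≤
      (|x| + |y| + 1) * M * 1 * M ^ 2 / 2 := by
    simp only [abs_mul, abs_div, abs_pow, abs_two]
    gcongr
  have h3 : |(x + u) * (y + v) * (Real.cos (a + d) -
      (Real.cos a - Real.sin a * d - Real.cos a * d ^ 2 / 2))| ≤ (|x| + 1) * (|y| + 1) * M ^ 3 := by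
    rw [abs_mul, abs_mul]
    gcongr
    · exact (abs_add_le _ _).trans (by linarith)
    · exact (abs_add_le _ _).trans (by linarith)
    · exact (abs_cos_add_sub_taylor_le a (hd.trans hM)).trans (by gcongr)
  rw [edgeRemainder]
  refine (abs_sub _ _).trans ((add_le_add ((abs_add_le _ _).trans (add_le_add h1 h2)) h3).trans ?_)
  nlinarith [mul_le_mul_of_nonneg_right hxy (pow_nonneg hM0 3),
    mul_le_mul_of_nonneg_right hxy1 (pow_nonneg hM0 3)]

theorem Emat_eq {n m : ℕ} {ep1 ep2 : Fin m → Fin n} (hep : ∀ k, ep1 k ≠ ep2 k)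
    (B : Fin m → ℝ) (Bii Xd Xd' : Vec n) (η : Vec m) :
    Emat ep1 ep2 B Bii Xd Xd' η = Fmat Bii Xd Xd' -
      ∑ k, (B k * Real.cos (η k)) • (single (ep1 k) (ep2 k) 1 + single (ep2 k) (ep1 k) 1) := by
  ext i j
  simp only [Emat, Fmat, of_apply, Matrix.sub_apply, diagonal_apply, Matrix.sum_apply,
    Matrix.smul_apply, Matrix.add_apply, single_apply, smul_eq_mul]
  split_ifs with hij
  · subst hij
    rw [Finset.sum_eq_zero fun k _ => by grind, sub_zero]
  · rw [zero_sub, neg_inj]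
    exact Finset.sum_congr rfl fun k _ => by grind

theorem dotProduct_Fmat_mulVec {n : ℕ} (Bii Xd Xd' v w : Vec n) :
    v ⬝ᵥ Fmat Bii Xd Xd' *ᵥ w =
      ∑ i, (1 - Bii i * (Xd i - Xd' i)) / (Xd i - Xd' i) * v i * w i := by
  simp only [Fmat, mulVec_diagonal, dotProduct]
  exact Finset.sum_congr rfl fun i _ => by ring

theorem dotProduct_Emat_mulVec {n m : ℕ} {ep1 ep2 : Fin m → Fin n} (hep : ∀ k, ep1 k ≠ ep2 k)
    (B : Fin m → ℝ) (Bii Xd Xd' : Vec n) (η : Vec m) (v w : Vec n) :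
    v ⬝ᵥ Emat ep1 ep2 B Bii Xd Xd' η *ᵥ w =
      ∑ i, (1 - Bii i * (Xd i - Xd' i)) / (Xd i - Xd' i) * v i * w i -
      ∑ k, B k * Real.cos (η k) * (v (ep1 k) * w (ep2 k) + v (ep2 k) * w (ep1 k)) := by
  simp only [Emat_eq hep, sub_mulVec, dotProduct_sub, dotProduct_Fmat_mulVec, sum_mulVec,
    dotProduct_sum, smul_mulVec, dotProduct_smul, add_mulVec, dotProduct_add, single_mulVec_eq,
    one_mul, smul_eq_mul, dotProduct_single, mul_one]
  congr 1
  exact Finset.sum_congr rfl fun k _ => by ring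

theorem absD_transpose_mulVec {n m : ℕ} {ep1 ep2 : Fin m → Fin n} (hep : ∀ k, ep1 k ≠ ep2 k)
    (w : Vec n) : (absD ep1 ep2)ᵀ *ᵥ w = fun k => w (ep1 k) + w (ep2 k) := by
  ext k
  have hD : ∀ i, absD ep1 ep2 i k =
      (Pi.single (ep1 k) 1 : Vec n) i + (Pi.single (ep2 k) 1 : Vec n) i := by
    intro i
    simp only [absD, incD, of_apply, Pi.single_apply]
    grind
  simp [mulVec, dotProduct, hD, add_mul, Finset.sum_add_distrib, Pi.single_apply]

theorem Schur_eq {n m : ℕ} (ep1 ep2 : Fin m → Fin n) (B : Fin m → ℝ) (Bii Xd Xd' : Vec n)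
    {ηb : Vec m} (hc : ∀ k, Real.cos (ηb k) ≠ 0) (Vb : Vec n) :
    Schur ep1 ep2 B Bii Xd Xd' ηb Vb = Emat ep1 ep2 B Bii Xd Xd' ηb -
      (diagonal (fun i => (Vb i)⁻¹) * absD ep1 ep2) *
        diagonal (fun k => Vb (ep1 k) * Vb (ep2 k) * B k *
          (Real.sin (ηb k) ^ 2 / Real.cos (ηb k))) *
        (diagonal (fun i => (Vb i)⁻¹) * absD ep1 ep2)ᵀ := by
  have hinv : (diagonal (cosv ηb))⁻¹ = diagonal fun k => (Real.cos (ηb k))⁻¹ :=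
    inv_eq_right_inv <| by
      rw [diagonal_mul_diagonal, ← diagonal_one]
      exact congrArg diagonal (funext fun k => mul_inv_cancel₀ (hc k))
  rw [Schur, hinv, transpose_mul, diagonal_transpose, Gam]
  simp only [Matrix.mul_assoc, diagonal_mul_diagonal]
  congr 5
  ext k
  simp only [sinv]
  ring

theorem dotProduct_Schur_mulVec {n m : ℕ} {ep1 ep2 : Fin m → Fin n} (hep : ∀ k, ep1 k ≠ ep2 k)
    (B : Fin m → ℝ) (Bii Xd Xd' : Vec n) {ηb : Vec m} (hc : ∀ k, Real.cos (ηb k) ≠ 0)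
    (Vb w : Vec n) :
    w ⬝ᵥ Schur ep1 ep2 B Bii Xd Xd' ηb Vb *ᵥ w =
      ∑ i, (1 - Bii i * (Xd i - Xd' i)) / (Xd i - Xd' i) * w i * w i -
      ∑ k, B k * Real.cos (ηb k) * (w (ep1 k) * w (ep2 k) + w (ep2 k) * w (ep1 k)) -
      ∑ k, Vb (ep1 k) * Vb (ep2 k) * B k * (Real.sin (ηb k) ^ 2 / Real.cos (ηb k)) *
        (w (ep1 k) / Vb (ep1 k) + w (ep2 k) / Vb (ep2 k)) ^ 2 := by
  rw [Schur_eq ep1 ep2 B Bii Xd Xd' hc, sub_mulVec, dotProduct_sub, dotProduct_Emat_mulVec hep,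
    dotProduct_mul_diagonal_mul_transpose_mulVec, transpose_mul, diagonal_transpose,
    ← mulVec_mulVec, absD_transpose_mulVec hep]
  simp only [mulVec_diagonal, div_eq_inv_mul]

/-- The second-order Taylor term `½ pᵀ ∇²W₂(η̄, V̄) p` of `W₂` at the increment `p = (δ, Δ)`. -/
def W2Quadratic {n m : ℕ} (ep1 ep2 : Fin m → Fin n) (B : Fin m → ℝ) (Bii Xd Xd' : Vec n)
    (ηb : Vec m) (Vb : Vec n) (p : Vec m × Vec n) : ℝ :=
  (1 / 2) * ∑ i, (1 - Bii i * (Xd i - Xd' i)) / (Xd i - Xd' i) * p.2 i ^ 2 +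
    ∑ k, B k * edgeQuadratic (ηb k) (Vb (ep1 k)) (Vb (ep2 k)) (p.1 k) (p.2 (ep1 k)) (p.2 (ep2 k))

section Network

variable {n m : ℕ} {ep1 ep2 : Fin m → Fin n} {B : Fin m → ℝ} {Bii Xd Xd' : Vec n} {ηb : Vec m}
  {Vb : Vec n}

theorem continuous_W2Quadratic : Continuous (W2Quadratic ep1 ep2 B Bii Xd Xd' ηb Vb) := by
  unfold W2Quadratic edgeQuadratic
  fun_prop

theorem W2Quadratic_smul (t : ℝ) (p : Vec m × Vec n) :
    W2Quadratic ep1 ep2 B Bii Xd Xd' ηb Vb (t • p) =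
      t ^ 2 * W2Quadratic ep1 ep2 B Bii Xd Xd' ηb Vb p := by
  simp only [W2Quadratic, edgeQuadratic, Prod.smul_fst, Prod.smul_snd, Pi.smul_apply, smul_eq_mul,
    mul_add, Finset.mul_sum]
  congr 1 <;> exact Finset.sum_congr rfl fun _ _ => by ring

theorem W2Quadratic_eq_sum_sq_add (hep : ∀ k, ep1 k ≠ ep2 k) (hc : ∀ k, Real.cos (ηb k) ≠ 0)
    (hV : ∀ i, Vb i ≠ 0) (p : Vec m × Vec n) :
    W2Quadratic ep1 ep2 B Bii Xd Xd' ηb Vb p =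
      ∑ k, B k * (Vb (ep1 k) * Vb (ep2 k) * Real.cos (ηb k) / 2 *
        (p.1 k + Real.sin (ηb k) / Real.cos (ηb k) *
          (p.2 (ep1 k) / Vb (ep1 k) + p.2 (ep2 k) / Vb (ep2 k))) ^ 2) +
      1 / 2 * (p.2 ⬝ᵥ Schur ep1 ep2 B Bii Xd Xd' ηb Vb *ᵥ p.2) := by
  rw [W2Quadratic, dotProduct_Schur_mulVec hep B Bii Xd Xd' hc]
  have hedge : ∑ k, B k * edgeQuadratic (ηb k) (Vb (ep1 k)) (Vb (ep2 k)) (p.1 k) (p.2 (ep1 k))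
        (p.2 (ep2 k)) =
      ∑ k, (B k * (Vb (ep1 k) * Vb (ep2 k) * Real.cos (ηb k) / 2 *
        (p.1 k + Real.sin (ηb k) / Real.cos (ηb k) *
          (p.2 (ep1 k) / Vb (ep1 k) + p.2 (ep2 k) / Vb (ep2 k))) ^ 2)
        - 1 / 2 * (B k * Real.cos (ηb k) * (p.2 (ep1 k) * p.2 (ep2 k) + p.2 (ep2 k) * p.2 (ep1 k)))
        - 1 / 2 * (Vb (ep1 k) * Vb (ep2 k) * B k * (Real.sin (ηb k) ^ 2 / Real.cos (ηb k)) *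
          (p.2 (ep1 k) / Vb (ep1 k) + p.2 (ep2 k) / Vb (ep2 k)) ^ 2)) :=
    Finset.sum_congr rfl fun k _ => by
      rw [edgeQuadratic_eq_sq_sub (hc k) (hV _) (hV _)]; ring
  have hnode : ∑ i, (1 - Bii i * (Xd i - Xd' i)) / (Xd i - Xd' i) * p.2 i ^ 2 =
      ∑ i, (1 - Bii i * (Xd i - Xd' i)) / (Xd i - Xd' i) * p.2 i * p.2 i :=
    Finset.sum_congr rfl fun i _ => by ring
  simp only [Finset.sum_sub_distrib, ← Finset.mul_sum] at hedge
  linarith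

theorem W2Quadratic_pos (hep : ∀ k, ep1 k ≠ ep2 k) (hB : ∀ k, 0 < B k)
    (hc : ∀ k, 0 < Real.cos (ηb k)) (hV : ∀ i, 0 < Vb i)
    (hPD : (Schur ep1 ep2 B Bii Xd Xd' ηb Vb).PosDef) {p : Vec m × Vec n} (hp : p ≠ 0) :
    0 < W2Quadratic ep1 ep2 B Bii Xd Xd' ηb Vb p := by
  have hweight : ∀ k, 0 < Vb (ep1 k) * Vb (ep2 k) * Real.cos (ηb k) / 2 := fun k => by
    have := hV (ep1 k); have := hV (ep2 k); have := hc k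
    positivity
  rw [W2Quadratic_eq_sum_sq_add hep (fun k => (hc k).ne') (fun i => (hV i).ne')]
  rcases eq_or_ne p.2 0 with h2 | h2
  · obtain ⟨k, hk⟩ : ∃ k, p.1 k ≠ 0 := Function.ne_iff.mp fun h1 => hp (Prod.ext h1 h2)
    simp only [h2, Pi.zero_apply, zero_div, add_zero, mul_zero, zero_dotProduct]
    exact Finset.sum_pos'
      (fun k _ => mul_nonneg (hB k).le (mul_nonneg (hweight k).le (sq_nonneg _)))
      ⟨k, Finset.mem_univ k, mul_pos (hB k) (mul_pos (hweight k) (by positivity))⟩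
  · have hS := hPD.dotProduct_mulVec_pos h2
    rw [star_trivial] at hS
    have hsq := Finset.sum_nonneg fun k (_ : k ∈ Finset.univ) =>
      mul_nonneg (hB k).le (mul_nonneg (hweight k).le (sq_nonneg (p.1 k +
        Real.sin (ηb k) / Real.cos (ηb k) * (p.2 (ep1 k) / Vb (ep1 k) + p.2 (ep2 k) / Vb (ep2 k)))))
    linarith

theorem W2_add_eq (hep : ∀ k, ep1 k ≠ ep2 k) (p : Vec m × Vec n) :
    W2 ep1 ep2 B Bii Xd Xd' (Emat ep1 ep2 B Bii Xd Xd' ηb *ᵥ Vb) ηb Vb (ηb + p.1) (Vb + p.2) =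
      W2Quadratic ep1 ep2 B Bii Xd Xd' ηb Vb p +
        ∑ k, B k * edgeRemainder (ηb k) (Vb (ep1 k)) (Vb (ep2 k)) (p.1 k) (p.2 (ep1 k))
          (p.2 (ep2 k)) := by
  rw [W2, dotProduct_comm (Emat _ _ _ _ _ _ _ *ᵥ Vb), add_sub_cancel_left,
    dotProduct_Emat_mulVec hep, dotProduct_Fmat_mulVec, dotProduct_Fmat_mulVec, W2Quadratic]
  simp only [Gam, mulVec_diagonal, dotProduct, Pi.one_apply, one_mul, cosv, sinv, Pi.add_apply,
    add_sub_cancel_left]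
  have hedge : ∑ k, (B k * edgeQuadratic (ηb k) (Vb (ep1 k)) (Vb (ep2 k)) (p.1 k) (p.2 (ep1 k))
        (p.2 (ep2 k)) + B k * edgeRemainder (ηb k) (Vb (ep1 k)) (Vb (ep2 k)) (p.1 k) (p.2 (ep1 k))
        (p.2 (ep2 k))) =
      ∑ k, (-((Vb (ep1 k) + p.2 (ep1 k)) * (Vb (ep2 k) + p.2 (ep2 k)) * B k *
          Real.cos (ηb k + p.1 k)) + Vb (ep1 k) * Vb (ep2 k) * B k * Real.cos (ηb k)
        - Vb (ep1 k) * Vb (ep2 k) * B k * Real.sin (ηb k) * p.1 k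
        + B k * Real.cos (ηb k) * (p.2 (ep1 k) * Vb (ep2 k) + p.2 (ep2 k) * Vb (ep1 k))) :=
    Finset.sum_congr rfl fun k _ => by simp only [edgeQuadratic, edgeRemainder]; ring
  have hnode : ∑ i, (1 - Bii i * (Xd i - Xd' i)) / (Xd i - Xd' i) * p.2 i ^ 2 =
      ∑ i, ((1 - Bii i * (Xd i - Xd' i)) / (Xd i - Xd' i) * (Vb i + p.2 i) * (Vb i + p.2 i)
        - (1 - Bii i * (Xd i - Xd' i)) / (Xd i - Xd' i) * Vb i * Vb i
        - 2 * ((1 - Bii i * (Xd i - Xd' i)) / (Xd i - Xd' i) * p.2 i * Vb i)) :=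
    Finset.sum_congr rfl fun i _ => by ring
  simp only [Finset.sum_add_distrib, Finset.sum_sub_distrib, Finset.sum_neg_distrib,
    ← Finset.mul_sum] at hedge hnode
  linarith

theorem isBigO_sum_edgeRemainder :
    (fun p : Vec m × Vec n => ∑ k, B k * edgeRemainder (ηb k) (Vb (ep1 k)) (Vb (ep2 k)) (p.1 k)
      (p.2 (ep1 k)) (p.2 (ep2 k))) =O[𝓝 0] fun p : Vec m × Vec n => ‖p‖ ^ 3 := by
  refine IsBigO.fun_sum fun k _ => IsBigO.const_mul_left ?_ (B k)
  refine IsBigO.of_bound (3 * ((|Vb (ep1 k)| + 1) * (|Vb (ep2 k)| + 1))) ?_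
  filter_upwards [Metric.closedBall_mem_nhds (0 : Vec m × Vec n) one_pos] with p hp
  have hcoord1 : ∀ k, |p.1 k| ≤ ‖p‖ := fun k =>
    (Real.norm_eq_abs _).symm.trans_le ((norm_le_pi_norm p.1 k).trans (norm_fst_le p))
  have hcoord2 : ∀ i, |p.2 i| ≤ ‖p‖ := fun i =>
    (Real.norm_eq_abs _).symm.trans_le ((norm_le_pi_norm p.2 i).trans (norm_snd_le p))
  rw [Real.norm_eq_abs, norm_pow, norm_norm]
  exact abs_edgeRemainder_le _ _ _ (mem_closedBall_zero_iff.mp hp) (hcoord1 k) (hcoord2 _)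
    (hcoord2 _)

end Network

/-- Lemma 2: under Assumption 3, `W₂` has a strict local minimum at
`(η̄, V̄)`, with `W₂(η̄, V̄) = 0`. -/
theorem W2_strict_local_minimum
    {n m : ℕ} (ep1 ep2 : Fin m → Fin n) (hep : ∀ k, ep1 k ≠ ep2 k)
    (B : Fin m → ℝ) (hB : ∀ k, 0 < B k)
    (Bii Xd Xd' : Vec n)
    (Efd : Vec n) (ηb : Vec m) (Vb : Vec n)
    (hηb : ∀ k, ηb k ∈ Set.Ioo (-(π / 2)) (π / 2))
    (hVb : ∀ i, 0 < Vb i)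
    (hEfd : (Emat ep1 ep2 B Bii Xd Xd' ηb).mulVec Vb = Efd)
    (hPD : (Schur ep1 ep2 B Bii Xd Xd' ηb Vb).PosDef) :
    W2 ep1 ep2 B Bii Xd Xd' Efd ηb Vb ηb Vb = 0 ∧
    ∃ U ∈ 𝓝 ((ηb, Vb) : Vec m × Vec n), ∀ p ∈ U, p ≠ (ηb, Vb) →
      W2 ep1 ep2 B Bii Xd Xd' Efd ηb Vb ηb Vb < W2 ep1 ep2 B Bii Xd Xd' Efd ηb Vb p.1 p.2 := by
  subst hEfd
  have hbase : W2 ep1 ep2 B Bii Xd Xd' (Emat ep1 ep2 B Bii Xd Xd' ηb *ᵥ Vb) ηb Vb ηb Vb = 0 := by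
    simp [W2]
  refine ⟨hbase, eventually_iff_exists_mem.mp ?_⟩
  have hcos : ∀ k, 0 < Real.cos (ηb k) := fun k => Real.cos_pos_of_mem_Ioo (hηb k)
  refine eventually_lt_of_isLittleO_sub_quadratic
    (f := fun p : Vec m × Vec n =>
      W2 ep1 ep2 B Bii Xd Xd' (Emat ep1 ep2 B Bii Xd Xd' ηb *ᵥ Vb) ηb Vb p.1 p.2)
    continuous_W2Quadratic W2Quadratic_smul (fun p hp => W2Quadratic_pos hep hB hcos hVb hPD hp) ?_
  simp only [Prod.fst_add, Prod.snd_add, hbase, sub_zero, W2_add_eq hep, add_sub_cancel_left]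
  exact isBigO_sum_edgeRemainder.trans_isLittleO
    ((isLittleO_pow_pow (by norm_num : 2 < 3)).comp_tendsto tendsto_norm_zero)
end
end

section
/- Let η : ℝ → ℝ^m and V : ℝ → ℝⁿ be differentiable and satisfy η'(t) = v(t) and T·V'(t) = −E(η(t))·V(t) + Ē_fd for all t, where v : ℝ → ℝ^m. Let (η̄, V̄) be constants with E(η̄)·V̄ = Ē_fd. Then for all t, d/dt W₂(η(t), V(t)) = −(E(η(t))V(t) − Ē_fd)ᵀ·T⁻¹·(E(η(t))V(t) − Ē_fd) + (Γ(V(t))sin(η(t)) − Γ(V̄)sin(η̄))ᵀ·v(t). Hence the system η̇ = v, TV̇ = −E(η)V + Ē_fd with output λ = Γ(V)sin(η) is incrementally passive with respect to the constant equilibrium (η̄, V̄) (whose input v̄ = 0 and output λ̄ = Γ(V̄)sin(η̄)). -/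
/-!
Off the diagonal, `E(η)` is minus the adjacency matrix `A(η)` of the network weighted by
`B cos η`, and on it `E(η)` agrees with `F`, so `E(η) = F − A(η)`. Since `1ᵀΓ(V)cos η` has
`V`-gradient `A(η)V` and `η`-gradient `−Γ(V)sin η`, the chain rule gives
`Ẇ₂ = (E(η)V − Ē_fd)ᵀV̇ + (Γ(V)sin η − Γ(V̄)sin η̄)ᵀv`, and the dynamics say
`V̇ = −T⁻¹(E(η)V − Ē_fd)`.
-/

open Matrix Real Filter Topology Set

noncomputable section

section Calculus

variable {𝕜 ι : Type*} [NontriviallyNormedField 𝕜] [Fintype ι] {f g : 𝕜 → ι → 𝕜}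
  {f' g' : ι → 𝕜} {t : 𝕜}

theorem HasDerivAt.dotProduct (hf : HasDerivAt f f' t) (hg : HasDerivAt g g' t) :
    HasDerivAt (fun s => f s ⬝ᵥ g s) (f' ⬝ᵥ g t + f t ⬝ᵥ g') t := by
  have hsum : HasDerivAt (fun s => ∑ i, f s i * g s i) (∑ i, (f' i * g t i + f t i * g' i)) t :=
    HasDerivAt.fun_sum fun i _ => (hasDerivAt_pi.1 hf i).mul (hasDerivAt_pi.1 hg i)
  rw [Finset.sum_add_distrib] at hsum
  exact hsum

theorem HasDerivAt.const_dotProduct (a : ι → 𝕜) (hf : HasDerivAt f f' t) :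
    HasDerivAt (fun s => a ⬝ᵥ f s) (a ⬝ᵥ f') t := by
  simpa using (hasDerivAt_const t a).dotProduct hf

theorem HasDerivAt.const_mulVec {κ : Type*} (M : Matrix κ ι 𝕜) (hf : HasDerivAt f f' t) :
    HasDerivAt (fun s => M *ᵥ f s) (M *ᵥ f') t :=
  hasDerivAt_pi.2 fun i => hf.const_dotProduct (M i)

theorem HasDerivAt.dotProduct_mulVec_self {M : Matrix ι ι 𝕜} (hM : M.IsSymm)
    (hf : HasDerivAt f f' t) :
    HasDerivAt (fun s => f s ⬝ᵥ M *ᵥ f s) (2 * (M *ᵥ f t ⬝ᵥ f')) t := by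
  convert hf.dotProduct (hf.const_mulVec M) using 1
  rw [dotProduct_comm f', dotProduct_mulVec (f t), ← mulVec_transpose, hM]
  ring

end Calculus

theorem diagonal_inv_mulVec_of_diagonal_mulVec_eq {K ι : Type*} [Field K] [Fintype ι]
    [DecidableEq ι] {d x y : ι → K} (hd : ∀ i, d i ≠ 0) (h : diagonal d *ᵥ x = y) :
    diagonal (fun i => (d i)⁻¹) *ᵥ y = x := by
  rw [← h, mulVec_mulVec, diagonal_mul_diagonal]
  simp [hd]

theorem single_mulVec_dotProduct {R ι : Type*} [NonUnitalNonAssocSemiring R] [Fintype ι]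
    [DecidableEq ι] (i j : ι) (a : R) (x w : ι → R) : single i j a *ᵥ x ⬝ᵥ w = a * x j * w i := by
  rw [single_mulVec, ← Pi.single, single_dotProduct]

section Network

variable {n m : ℕ} (ep1 ep2 : Fin m → Fin n)

def edgeAdj (c : Fin m → ℝ) : Matrix (Fin n) (Fin n) ℝ :=
  ∑ k, (single (ep1 k) (ep2 k) (c k) + single (ep2 k) (ep1 k) (c k))

theorem edgeAdj_mulVec_dotProduct (c : Fin m → ℝ) (x w : Vec n) :
    edgeAdj ep1 ep2 c *ᵥ x ⬝ᵥ w
      = ∑ k, c k * (x (ep2 k) * w (ep1 k) + x (ep1 k) * w (ep2 k)) := by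
  simp only [edgeAdj, sum_mulVec, sum_dotProduct, add_mulVec, add_dotProduct,
    single_mulVec_dotProduct, mul_add, mul_assoc]

theorem Emat_eq_Fmat_sub_edgeAdj (hep : ∀ k, ep1 k ≠ ep2 k) (B : Fin m → ℝ)
    (Bii Xd Xd' : Vec n) (θ : Vec m) :
    Emat ep1 ep2 B Bii Xd Xd' θ = Fmat Bii Xd Xd' - edgeAdj ep1 ep2 (B * cosv θ) := by
  ext i j
  simp only [Emat, Fmat, edgeAdj, of_apply, Matrix.sub_apply, Matrix.sum_apply,
    Matrix.add_apply, single_apply, diagonal_apply]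
  split_ifs with hij
  · subst hij
    have hloop : ∀ k, ¬(ep1 k = i ∧ ep2 k = i) := fun k h => hep k (h.1.trans h.2.symm)
    simp [hloop, and_comm]
  · rw [zero_sub, neg_inj]
    refine Finset.sum_congr rfl fun k _ => ?_
    split_ifs <;> simp_all [cosv]

theorem Gam_mulVec_dotProduct (B : Fin m → ℝ) (V : Vec n) (w u : Vec m) :
    Gam ep1 ep2 B V *ᵥ w ⬝ᵥ u = ∑ k, V (ep1 k) * V (ep2 k) * B k * w k * u k := by
  simp [Gam, dotProduct, mulVec_diagonal, mul_assoc]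

theorem hasDerivAt_one_dotProduct_Gam_mulVec_cosv (B : Fin m → ℝ) {η : ℝ → Vec m}
    {V : ℝ → Vec n} {v : Vec m} {V' : Vec n} {t : ℝ}
    (hη : HasDerivAt η v t) (hV : HasDerivAt V V' t) :
    HasDerivAt (fun s => 1 ⬝ᵥ Gam ep1 ep2 B (V s) *ᵥ cosv (η s))
      (edgeAdj ep1 ep2 (B * cosv (η t)) *ᵥ V t ⬝ᵥ V'
        - Gam ep1 ep2 B (V t) *ᵥ sinv (η t) ⬝ᵥ v) t := by
  simp only [dotProduct_comm 1, Gam_mulVec_dotProduct, cosv, Pi.one_apply, mul_one]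
  refine (HasDerivAt.fun_sum (u := Finset.univ) fun k _ =>
    ((((hasDerivAt_pi.1 hV (ep1 k)).mul (hasDerivAt_pi.1 hV (ep2 k))).mul_const (B k)).mul
      (hasDerivAt_pi.1 hη k).cos)).congr_deriv ?_
  rw [edgeAdj_mulVec_dotProduct, ← Finset.sum_sub_distrib]
  refine Finset.sum_congr rfl fun k _ => ?_
  simp only [Pi.mul_apply, cosv, sinv]
  ring

end Network

theorem incremental_passivity_eta_V_general
    {n m : ℕ} (ep1 ep2 : Fin m → Fin n) (hep : ∀ k, ep1 k ≠ ep2 k)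
    (B : Fin m → ℝ)
    (Bii Xd Xd' : Vec n)
    (Td : Vec n) (hT : ∀ i, 0 < Td i)
    (Efd : Vec n)
    (η : ℝ → Vec m) (v : ℝ → Vec m) (V V' : ℝ → Vec n)
    (hη : ∀ t, HasDerivAt η (v t) t)
    (hV : ∀ t, HasDerivAt V (V' t) t)
    (hVdyn : ∀ t, (Matrix.diagonal Td).mulVec (V' t)
      = -(Emat ep1 ep2 B Bii Xd Xd' (η t)).mulVec (V t) + Efd)
    (ηb : Vec m) (Vb : Vec n) :
    ∀ t, HasDerivAt (fun s => W2 ep1 ep2 B Bii Xd Xd' Efd ηb Vb (η s) (V s))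
      (-(((Emat ep1 ep2 B Bii Xd Xd' (η t)).mulVec (V t) - Efd) ⬝ᵥ
          (Matrix.diagonal fun i => (Td i)⁻¹).mulVec
            ((Emat ep1 ep2 B Bii Xd Xd' (η t)).mulVec (V t) - Efd))
        + ((Gam ep1 ep2 B (V t)).mulVec (sinv (η t))
            - (Gam ep1 ep2 B Vb).mulVec (sinv ηb)) ⬝ᵥ v t) t := by
  intro t
  have hgrad : diagonal (fun i => (Td i)⁻¹) *ᵥ (Emat ep1 ep2 B Bii Xd Xd' (η t) *ᵥ V t - Efd)
      = -V' t := by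
    rw [← diagonal_inv_mulVec_of_diagonal_mulVec_eq (fun i => (hT i).ne') (hVdyn t),
      ← mulVec_neg, neg_add, neg_neg, ← sub_eq_add_neg]
  have hW2 := (((((hasDerivAt_one_dotProduct_Gam_mulVec_cosv ep1 ep2 B (hη t) (hV t)).neg.add_const
    (1 ⬝ᵥ Gam ep1 ep2 B Vb *ᵥ cosv ηb)).sub
    (((hη t).sub_const ηb).const_dotProduct (Gam ep1 ep2 B Vb *ᵥ sinv ηb))).sub
    (((hV t).sub_const Vb).const_dotProduct Efd)).add
    (((hV t).dotProduct_mulVec_self (M := Fmat Bii Xd Xd') (isSymm_diagonal _)).const_mul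
      (1 / 2))).sub_const
    ((1 / 2) * (Vb ⬝ᵥ Fmat Bii Xd Xd' *ᵥ Vb))
  refine hW2.congr_deriv ?_
  rw [hgrad, Emat_eq_Fmat_sub_edgeAdj ep1 ep2 hep, sub_mulVec]
  simp only [sub_dotProduct, dotProduct_neg]
  ring

/-- Proposition 2: along solutions of `η̇ = v`, `TV̇ = −E(η)V + Ē_fd`,
the storage function `W₂` satisfies
`Ẇ₂ = −‖∇_V W₂‖²_{T⁻¹} + (λ − λ̄)ᵀ(v − v̄)` with `λ = Γ(V)sin(η)`, `λ̄ = Γ(V̄)sin(η̄)`,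
`v̄ = 0`; this is incremental passivity with respect to the equilibrium `(η̄, V̄)`. -/
theorem incremental_passivity_eta_V
    {n m : ℕ} (ep1 ep2 : Fin m → Fin n) (hep : ∀ k, ep1 k ≠ ep2 k)
    (B : Fin m → ℝ) (hB : ∀ k, 0 < B k)
    (Bii Xd Xd' : Vec n)
    (Td : Vec n) (hT : ∀ i, 0 < Td i)
    (Efd : Vec n)
    (η : ℝ → Vec m) (v : ℝ → Vec m) (V V' : ℝ → Vec n)
    (hη : ∀ t, HasDerivAt η (v t) t)
    (hV : ∀ t, HasDerivAt V (V' t) t)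
    (hVdyn : ∀ t, (Matrix.diagonal Td).mulVec (V' t)
      = -(Emat ep1 ep2 B Bii Xd Xd' (η t)).mulVec (V t) + Efd)
    (ηb : Vec m) (Vb : Vec n)
    (hbar : (Emat ep1 ep2 B Bii Xd Xd' ηb).mulVec Vb = Efd) :
    ∀ t, HasDerivAt (fun s => W2 ep1 ep2 B Bii Xd Xd' Efd ηb Vb (η s) (V s))
      (-(((Emat ep1 ep2 B Bii Xd Xd' (η t)).mulVec (V t) - Efd) ⬝ᵥ
          (Matrix.diagonal fun i => (Td i)⁻¹).mulVec
            ((Emat ep1 ep2 B Bii Xd Xd' (η t)).mulVec (V t) - Efd))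
        + ((Gam ep1 ep2 B (V t)).mulVec (sinv (η t))
            - (Gam ep1 ep2 B Vb).mulVec (sinv ηb)) ⬝ᵥ v t) t :=
  incremental_passivity_eta_V_general ep1 ep2 hep B Bii Xd Xd' Td hT Efd η v V V' hη hV hVdyn ηb Vb
end
end

section
/- Let S ∈ ℝ^{r×r} be skew-symmetric and invertible (equivalently, skew-symmetric with purely imaginary nonzero eigenvalues), and let R ∈ ℝ^{1×r} be such that the pair (R, S) is observable, i.e. the only vector x with R·Sʲ·x = 0 for all j = 0, 1, …, r−1 is x = 0. If x : ℝ → ℝ^r is differentiable with x'(t) = S·x(t) for all t and the scalar function t ↦ R·x(t) is constant, then x(t) = 0 for all t (and the constant value of R·x is 0). -/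
/-!
Differentiating the constant output `R x` along `ẋ = S x` shows by induction that every
higher output `R Sʲ⁺¹ x(t)` vanishes, i.e. `S x(t)` is unobservable. Observability forces
`S x(t) = 0`, and invertibility of `S` then gives `x(t) = 0`.
-/

open Matrix

variable {𝕜 ι : Type*} [NontriviallyNormedField 𝕜] [Fintype ι]

theorem HasDerivAt.const_dotProduct_s14 {x : 𝕜 → ι → 𝕜} {x' : ι → 𝕜} {t : 𝕜} (w : ι → 𝕜)
    (hx : HasDerivAt x x' t) : HasDerivAt (fun s => w ⬝ᵥ x s) (w ⬝ᵥ x') t :=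
  HasDerivAt.fun_sum fun i _ => (hasDerivAt_pi.1 hx i).const_mul (w i)

section LinearSystem

variable [DecidableEq ι] {S : Matrix ι ι 𝕜} {R : ι → 𝕜} {x : 𝕜 → ι → 𝕜}

theorem hasDerivAt_dotProduct_pow_mulVec (hx : ∀ t, HasDerivAt x (S *ᵥ x t) t) (j : ℕ) (t : 𝕜) :
    HasDerivAt (fun s => R ⬝ᵥ (S ^ j) *ᵥ x s) (R ⬝ᵥ (S ^ (j + 1)) *ᵥ x t) t := by
  simp only [dotProduct_mulVec]
  convert (hx t).const_dotProduct_s14 (R ᵥ* S ^ j) using 1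
  rw [pow_succ, ← vecMul_vecMul, dotProduct_mulVec]

theorem dotProduct_pow_succ_mulVec_eq_zero_of_const (hx : ∀ t, HasDerivAt x (S *ᵥ x t) t)
    {j : ℕ} {c : 𝕜} (hc : ∀ t, R ⬝ᵥ (S ^ j) *ᵥ x t = c) (t : 𝕜) :
    R ⬝ᵥ (S ^ (j + 1)) *ᵥ x t = 0 :=
  (hasDerivAt_dotProduct_pow_mulVec hx j t).unique <| by
    rw [funext hc]
    exact hasDerivAt_const t c

theorem dotProduct_pow_succ_mulVec_eq_zero (hx : ∀ t, HasDerivAt x (S *ᵥ x t) t) {c : 𝕜}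
    (hc : ∀ t, R ⬝ᵥ x t = c) (j : ℕ) (t : 𝕜) : R ⬝ᵥ (S ^ (j + 1)) *ᵥ x t = 0 := by
  induction j generalizing t with
  | zero => exact dotProduct_pow_succ_mulVec_eq_zero_of_const hx (c := c) (by simpa using hc) t
  | succ j ih => exact dotProduct_pow_succ_mulVec_eq_zero_of_const hx ih t

end LinearSystem

theorem observable_oscillator_constant_output_zero_general
    {r : ℕ} (S : Matrix (Fin r) (Fin r) ℝ) (R : Fin r → ℝ)
    (hinv : IsUnit S.det)
    (hobs : ∀ x : Fin r → ℝ, (∀ j < r, R ⬝ᵥ (S ^ j).mulVec x = 0) → x = 0)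
    (x : ℝ → Fin r → ℝ)
    (hx : ∀ t, HasDerivAt x (S.mulVec (x t)) t)
    (hconst : ∃ c : ℝ, ∀ t, R ⬝ᵥ x t = c) :
    (∀ t, x t = 0) ∧ (∀ t, R ⬝ᵥ x t = 0) := by
  obtain ⟨c, hc⟩ := hconst
  have hS_inj : Function.Injective S.mulVec :=
    mulVec_injective_iff_isUnit.2 ((isUnit_iff_isUnit_det S).2 hinv)
  have hzero : ∀ t, x t = 0 := fun t => by
    have hSx : S *ᵥ x t = 0 := hobs _ fun j _ => by
      rw [mulVec_mulVec, ← pow_succ]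
      exact dotProduct_pow_succ_mulVec_eq_zero hx hc j t
    exact hS_inj (hSx.trans (mulVec_zero S).symm)
  exact ⟨hzero, fun t => by rw [hzero t, dotProduct_zero]⟩

/-- if `S` is skew-symmetric and invertible, `(R, S)` is observable, and a
trajectory of `ẋ = Sx` has constant output `Rx`, then the trajectory is identically zero
(and the constant output value is zero). -/
theorem observable_oscillator_constant_output_zero
    {r : ℕ} (S : Matrix (Fin r) (Fin r) ℝ) (R : Fin r → ℝ)
    (hskew : Sᵀ = -S) (hinv : IsUnit S.det)
    (hobs : ∀ x : Fin r → ℝ, (∀ j < r, R ⬝ᵥ (S ^ j).mulVec x = 0) → x = 0)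
    (x : ℝ → Fin r → ℝ)
    (hx : ∀ t, HasDerivAt x (S.mulVec (x t)) t)
    (hconst : ∃ c : ℝ, ∀ t, R ⬝ᵥ x t = c) :
    (∀ t, x t = 0) ∧ (∀ t, R ⬝ᵥ x t = 0) :=
  observable_oscillator_constant_output_zero_general S R hinv hobs x hx hconst
end
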